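/- If a permutation π ∈ S_n contains the pattern 231, then there exist i ∈ [n-1] and an entry a > i+1 such that i+1 appears to the left of a and i appears to the right of a in π; in particular p_i(π) = swap_i(π) ≠ π. -/

import Mathlib

/-- `l` is a permutation of `{1, …, n}`, written as a word. -/
def IsPermList (n : ℕ) (l : List ℕ) : Prop := l.Perm (List.range' 1 n)

/-- The word obtained from `l` by exchanging the positions of the entries `i` and `i+1`. -/
def swapEntries (i : ℕ) (l : List ℕ) : List ℕ :=
  l.map fun x => if x = i then i + 1 else if x = i + 1 then i else x

/-- Some entry larger than `i+1` appears (strictly) between the entries `i` and `i+1`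
in the word `l`. -/
def ToggleApplies (i : ℕ) (l : List ℕ) : Prop :=
  ∃ a ∈ l, i + 1 < a ∧
    min (l.idxOf i) (l.idxOf (i + 1)) < l.idxOf a ∧
    l.idxOf a < max (l.idxOf i) (l.idxOf (i + 1))

open scoped Classical in
/-- The polyurethane toggle `p i`. -/
noncomputable def toggle (i : ℕ) (l : List ℕ) : List ℕ :=
  if ToggleApplies i l then swapEntries i l else l

/-- `l` contains the pattern 231. -/
def Contains231 (l : List ℕ) : Prop :=
  ∃ j₁ j₂ j₃, j₁ < j₂ ∧ j₂ < j₃ ∧ j₃ < l.length ∧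
    l.getD j₃ 0 < l.getD j₁ 0 ∧ l.getD j₁ 0 < l.getD j₂ 0

/-- `l` avoids the pattern 231. -/
def Avoids231 (l : List ℕ) : Prop := ¬ Contains231 l

/-- `l` avoids the pattern 132. -/
def Avoids132 (l : List ℕ) : Prop :=
  ¬ ∃ j₁ j₂ j₃, j₁ < j₂ ∧ j₂ < j₃ ∧ j₃ < l.length ∧
    l.getD j₁ 0 < l.getD j₃ 0 ∧ l.getD j₃ 0 < l.getD j₂ 0

/-- `l` avoids the pattern 312. -/
def Avoids312 (l : List ℕ) : Prop :=
  ¬ ∃ j₁ j₂ j₃, j₁ < j₂ ∧ j₂ < j₃ ∧ j₃ < l.length ∧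
    l.getD j₂ 0 < l.getD j₃ 0 ∧ l.getD j₃ 0 < l.getD j₁ 0

theorem Nat.exists_succ_not_of_le {p : ℕ → Prop} {a b : ℕ} (hab : a ≤ b) (ha : p a)
    (hb : ¬ p b) : ∃ i, a ≤ i ∧ i < b ∧ p i ∧ ¬ p (i + 1) := by
  induction b, hab using Nat.le_induction with
  | base => exact absurd ha hb
  | succ b hab ih =>
    by_cases hpb : p b
    · exact ⟨b, hab, b.lt_succ_self, hpb, hb⟩
    · obtain ⟨i, hai, hib, hpi, hpi'⟩ := ih hpb
      exact ⟨i, hai, hib.trans b.lt_succ_self, hpi, hpi'⟩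

theorem IsPermList.nodup {n : ℕ} {l : List ℕ} (hl : IsPermList n l) : l.Nodup :=
  hl.nodup_iff.mpr List.nodup_range'

theorem IsPermList.mem_iff {n : ℕ} {l : List ℕ} (hl : IsPermList n l) {v : ℕ} :
    v ∈ l ↔ 1 ≤ v ∧ v ≤ n := by
  rw [List.Perm.mem_iff hl, List.mem_range'_1]
  omega

theorem Contains231.exists_idxOf {l : List ℕ} (h231 : Contains231 l) (hnd : l.Nodup) :
    ∃ x ∈ l, ∃ y ∈ l, ∃ z ∈ l, l.idxOf x < l.idxOf y ∧ l.idxOf y < l.idxOf z ∧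
      z < x ∧ x < y := by
  obtain ⟨j₁, j₂, j₃, h₁₂, h₂₃, h₃, hzx, hxy⟩ := h231
  have h₂ : j₂ < l.length := h₂₃.trans h₃
  have h₁ : j₁ < l.length := h₁₂.trans h₂
  simp only [List.getD_eq_getElem _ _ h₁, List.getD_eq_getElem _ _ h₂,
    List.getD_eq_getElem _ _ h₃] at hzx hxy
  refine ⟨_, List.getElem_mem h₁, _, List.getElem_mem h₂, _, List.getElem_mem h₃, ?_⟩
  simp only [hnd.idxOf_getElem]
  exact ⟨h₁₂, h₂₃, hzx, hxy⟩

/-- Walking down the values from `x` to `z`, the position jumps across that of `y` at some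
consecutive pair `i + 1, i`. -/
theorem exists_succ_before_and_self_after {l : List ℕ} {x y z : ℕ} (hy : y ∈ l)
    (hxy : l.idxOf x < l.idxOf y) (hyz : l.idxOf y < l.idxOf z) (hzx : z < x) (hxy' : x < y) :
    ∃ i, z ≤ i ∧ i < x ∧ l.idxOf (i + 1) < l.idxOf y ∧ l.idxOf y < l.idxOf i := by
  obtain ⟨i, hzi, hix, hafter, hbefore⟩ :=
    Nat.exists_succ_not_of_le (p := fun v => l.idxOf y < l.idxOf v) hzx.le hyz hxy.not_gt
  refine ⟨i, hzi, hix, lt_of_le_of_ne (not_lt.mp hbefore) fun h => ?_, hafter⟩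
  have := (List.idxOf_inj hy).mp h.symm
  omega

theorem swapEntries_ne_self {i : ℕ} {l : List ℕ} (hi : i + 1 ∈ l) :
    swapEntries i l ≠ l := by
  intro h
  conv_rhs at h => rw [← List.map_id l]
  have := List.map_eq_map_iff.mp h (i + 1) hi
  simp at this

theorem toggle_eq_swapEntries {i a : ℕ} {l : List ℕ} (ha : a ∈ l) (hia : i + 1 < a)
    (hleft : l.idxOf (i + 1) < l.idxOf a) (hright : l.idxOf a < l.idxOf i) :
    toggle i l = swapEntries i l :=
  if_pos ⟨a, ha, hia, (min_le_right _ _).trans_lt hleft, hright.trans_le (le_max_left _ _)⟩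

theorem exists_toggle_of_contains231 (n : ℕ) (l : List ℕ) (hl : IsPermList n l)
    (h231 : Contains231 l) :
    ∃ i, 1 ≤ i ∧ i ≤ n - 1 ∧
      (∃ a ∈ l, i + 1 < a ∧ l.idxOf (i + 1) < l.idxOf a ∧ l.idxOf a < l.idxOf i) ∧
      toggle i l = swapEntries i l ∧ swapEntries i l ≠ l := by
  obtain ⟨x, hx, y, hy, z, hz, hxy, hyz, hzx, hxy'⟩ := h231.exists_idxOf hl.nodup
  obtain ⟨i, hzi, hix, hleft, hright⟩ := exists_succ_before_and_self_after hy hxy hyz hzx hxy'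
  have hz1 : 1 ≤ z := (hl.mem_iff.mp hz).1
  have hxn : x ≤ n := (hl.mem_iff.mp hx).2
  have hi1 : i + 1 ∈ l :=
    List.idxOf_lt_length_iff.mp (hleft.trans (List.idxOf_lt_length_iff.mpr hy))
  exact ⟨i, by omega, by omega, ⟨y, hy, by omega, hleft, hright⟩,
    toggle_eq_swapEntries hy (by omega) hleft hright, swapEntries_ne_self hi1⟩
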